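/- (Mean inequality.) Let μ be a Borel probability measure on ℝ with bounded support, let x = lim_{ε↓0} q_μ(ε) be its left end-point, y = lim_{ε↓0} q_μ(1−ε) its right end-point, and c = ∫ z dμ(z) its mean. If μ is n-completely mixable, then y + (n−1)x ≤ nc ≤ x + (n−1)y. -/

import Mathlib

open MeasureTheory ENNReal

/-- The tuple `μ` of Borel probability measures on ℝ is jointly mixable with center `C`:
there is a probability measure on ℝⁿ whose `i`-th one-dimensional marginal is `μ i` for each `i`
and which gives probability one to the hyperplane `{x : x₁ + ⋯ + xₙ = C}`. -/
def IsJointMix (n : ℕ) (μ : Fin n → Measure ℝ) (C : ℝ) : Prop :=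
  ∃ P : Measure (Fin n → ℝ), IsProbabilityMeasure P ∧
    (∀ i, P.map (fun x => x i) = μ i) ∧
    P {x | ∑ i, x i = C} = 1

/-- A Borel probability measure `μ` on ℝ is `n`-completely mixable with `n`-center `c`. -/
def IsCompletelyMixable (n : ℕ) (μ : Measure ℝ) (c : ℝ) : Prop :=
  IsJointMix n (fun _ => μ) (n * c)

/-- The quantile function of a probability measure on ℝ. -/
noncomputable def quantile (μ : Measure ℝ) (t : ℝ) : ℝ :=
  sInf {x : ℝ | t ≤ (μ (Set.Iic x)).toReal}

/-- The average quantile functional `R_{[a,b]}(μ)`. -/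
noncomputable def avgQuantile (μ : Measure ℝ) (a b : ℝ) : ℝ :=
  (b - a)⁻¹ * ∫ t in a..b, quantile μ t

/-!
Integrating the constraint `∑ i, ωᵢ = n c'` of a complete mix gives `c' = c`. The limits `x` and
`y` of the quantile function at `0⁺` and `1⁻` are the essential infimum and supremum of `μ`, so
almost surely every coordinate of the mix lies in `[x, y]`. On the hyperplane one coordinate is
`n c` minus the other `n - 1`, hence lies in `[n c - (n - 1) y, n c - (n - 1) x]` almost surely;
as that coordinate has law `μ`, comparing with its essential bounds gives both inequalities.
-/

open Filter Topology Set ProbabilityTheory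

section Quantile

variable {μ : Measure ℝ} {t w : ℝ}

lemma bddBelow_setOf_le_cdf (ht : 0 < t) : BddBelow {w | t ≤ cdf μ w} := by
  obtain ⟨w₀, hw₀⟩ := eventually_atBot.1 ((tendsto_cdf_atBot μ).eventually (gt_mem_nhds ht))
  exact ⟨w₀, fun w hw => le_of_not_gt fun hlt => (hw₀ w hlt.le).not_ge hw⟩

lemma nonempty_setOf_le_cdf (ht : t < 1) : {w | t ≤ cdf μ w}.Nonempty :=
  ((tendsto_cdf_atTop μ).eventually (lt_mem_nhds ht)).exists.imp fun _ => le_of_lt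

lemma ae_le_iff_measure_Iio_eq_zero {a : ℝ} : (∀ᵐ z ∂μ, a ≤ z) ↔ μ (Iio a) = 0 := by
  simp only [ae_iff, not_le]
  rfl

variable [IsProbabilityMeasure μ]

lemma quantile_eq_sInf_cdf (t : ℝ) : quantile μ t = sInf {w | t ≤ cdf μ w} := by
  simp only [quantile, cdf_eq_real, measureReal_def]

lemma quantile_le_of_le_cdf (ht : 0 < t) (h : t ≤ cdf μ w) : quantile μ t ≤ w :=
  (quantile_eq_sInf_cdf t).trans_le (csInf_le (bddBelow_setOf_le_cdf ht) h)

lemma cdf_lt_of_lt_quantile (ht : 0 < t) (h : w < quantile μ t) : cdf μ w < t :=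
  lt_of_not_ge fun h' => (quantile_le_of_le_cdf ht h').not_gt h

lemma le_cdf_of_quantile_lt (ht : t < 1) (h : quantile μ t < w) : t ≤ cdf μ w := by
  rw [quantile_eq_sInf_cdf] at h
  obtain ⟨v, hv, hvw⟩ := exists_lt_of_csInf_lt (nonempty_setOf_le_cdf ht) h
  exact hv.trans (monotone_cdf μ hvw.le)

lemma le_quantile_of_ae_le {a : ℝ} (h : ∀ᵐ z ∂μ, a ≤ z) (ht₀ : 0 < t) (ht₁ : t < 1) :
    a ≤ quantile μ t := by
  have hIio : μ (Iio a) = 0 := ae_le_iff_measure_Iio_eq_zero.1 h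
  rw [quantile_eq_sInf_cdf]
  refine le_csInf (nonempty_setOf_le_cdf ht₁) fun w hw => le_of_not_gt fun hwa => ?_
  have : μ (Iic w) = 0 := measure_mono_null (Iic_subset_Iio.2 hwa) hIio
  rw [mem_ofPred_eq, cdf_eq_real, measureReal_def, this, ENNReal.toReal_zero] at hw
  exact hw.not_gt ht₀

lemma ae_le_iff_cdf_eq_one {b : ℝ} : (∀ᵐ z ∂μ, z ≤ b) ↔ cdf μ b = 1 := by
  rw [ae_iff, ← ENNReal.ofReal_eq_one, ofReal_cdf]
  exact prob_compl_eq_zero_iff measurableSet_Iic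

lemma quantile_le_of_ae_le {b : ℝ} (h : ∀ᵐ z ∂μ, z ≤ b) (ht₀ : 0 < t) (ht₁ : t ≤ 1) :
    quantile μ t ≤ b :=
  quantile_le_of_le_cdf ht₀ (ht₁.trans (ae_le_iff_cdf_eq_one.1 h).ge)

end Quantile

section Endpoints

variable {μ : Measure ℝ} [IsProbabilityMeasure μ] {x y : ℝ}

lemma cdf_eq_zero_of_lt_of_tendsto_quantile (hx : Tendsto (quantile μ) (𝓝[>] 0) (𝓝 x)) {w : ℝ}
    (hw : w < x) : cdf μ w = 0 := by
  have hle : ∀ᶠ ε in 𝓝[>] 0, cdf μ w ≤ ε := by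
    filter_upwards [hx.eventually (lt_mem_nhds hw), self_mem_nhdsWithin] with ε hε hpos
    exact (cdf_lt_of_lt_quantile hpos hε).le
  exact le_antisymm (ge_of_tendsto (tendsto_nhdsWithin_of_tendsto_nhds tendsto_id) hle)
    (cdf_nonneg μ w)

lemma cdf_eq_one_of_gt_of_tendsto_quantile
    (hy : Tendsto (fun ε => quantile μ (1 - ε)) (𝓝[>] 0) (𝓝 y)) {w : ℝ} (hw : y < w) :
    cdf μ w = 1 := by
  have hge : ∀ᶠ ε in 𝓝[>] 0, 1 - ε ≤ cdf μ w := by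
    filter_upwards [hy.eventually (gt_mem_nhds hw), self_mem_nhdsWithin] with ε hε hpos
    exact le_cdf_of_quantile_lt (sub_lt_self 1 hpos) hε
  have hlim : Tendsto (fun ε : ℝ => 1 - ε) (𝓝[>] 0) (𝓝 1) := by
    simpa using (tendsto_nhdsWithin_of_tendsto_nhds (tendsto_id (x := 𝓝 (0 : ℝ)))).const_sub 1
  exact le_antisymm (cdf_le_one μ w) (le_of_tendsto hlim hge)

lemma ae_le_of_tendsto_quantile_zero (hx : Tendsto (quantile μ) (𝓝[>] 0) (𝓝 x)) :
    ∀ᵐ z ∂μ, x ≤ z := by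
  have hIic : ∀ w < x, μ (Iic w) = 0 := fun w hw => by
    rw [← ofReal_cdf, cdf_eq_zero_of_lt_of_tendsto_quantile hx hw, ENNReal.ofReal_zero]
  have hunion : ⋃ k : ℕ, Iic (x - 1 / ((k : ℝ) + 1)) = Iio x :=
    iUnion_Iic_eq_Iio_of_lt_of_tendsto (F := atTop) (fun k => sub_lt_self x Nat.one_div_pos_of_nat)
      (by simpa using tendsto_one_div_add_atTop_nhds_zero_nat.const_sub x)
  have hIio : μ (Iio x) = 0 := by
    rw [← hunion]
    exact measure_iUnion_null fun k => hIic _ (sub_lt_self x Nat.one_div_pos_of_nat)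
  exact ae_le_iff_measure_Iio_eq_zero.2 hIio

lemma ae_le_of_tendsto_quantile_one
    (hy : Tendsto (fun ε => quantile μ (1 - ε)) (𝓝[>] 0) (𝓝 y)) : ∀ᵐ z ∂μ, z ≤ y := by
  have hlim : Tendsto (cdf μ) (𝓝[>] y) (𝓝 (cdf μ y)) :=
    ((cdf μ).right_continuous y).mono Ioi_subset_Ici_self
  exact ae_le_iff_cdf_eq_one.2 <| tendsto_nhds_unique hlim <| tendsto_const_nhds.congr' <|
    eventually_nhdsWithin_of_forall fun w hw => (cdf_eq_one_of_gt_of_tendsto_quantile hy hw).symm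

lemma le_of_tendsto_quantile_zero (hx : Tendsto (quantile μ) (𝓝[>] 0) (𝓝 x)) {a : ℝ}
    (h : ∀ᵐ z ∂μ, a ≤ z) : a ≤ x :=
  ge_of_tendsto hx <| Filter.mem_of_superset (Ioo_mem_nhdsGT one_pos) fun _ hε =>
    le_quantile_of_ae_le h hε.1 hε.2

lemma le_of_tendsto_quantile_one (hy : Tendsto (fun ε => quantile μ (1 - ε)) (𝓝[>] 0) (𝓝 y))
    {b : ℝ} (h : ∀ᵐ z ∂μ, z ≤ b) : y ≤ b :=
  le_of_tendsto hy <| Filter.mem_of_superset (Ioo_mem_nhdsGT one_pos) fun _ hε =>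
    quantile_le_of_ae_le h (sub_pos.2 hε.2) (sub_le_self 1 hε.1.le)

end Endpoints

lemma sub_mul_le_of_sum_eq {ι : Type*} [Fintype ι] {f : ι → ℝ} {C b : ℝ}
    (hsum : ∑ i, f i = C) (hb : ∀ i, f i ≤ b) (j : ι) :
    C - (Fintype.card ι - 1) * b ≤ f j := by
  have := Finset.single_le_sum (f := fun i => b - f i) (fun i _ => sub_nonneg.2 (hb i))
    (Finset.mem_univ j)
  simp only [Finset.sum_sub_distrib, Finset.sum_const, Finset.card_univ, nsmul_eq_mul, hsum] at this
  linarith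

lemma le_sub_mul_of_sum_eq {ι : Type*} [Fintype ι] {f : ι → ℝ} {C a : ℝ}
    (hsum : ∑ i, f i = C) (ha : ∀ i, a ≤ f i) (j : ι) :
    f j ≤ C - (Fintype.card ι - 1) * a := by
  have := sub_mul_le_of_sum_eq (f := -f) (C := -C) (by simp [hsum]) (fun i => neg_le_neg (ha i)) j
  simp only [Pi.neg_apply] at this
  linarith

namespace IsJointMix

variable {n : ℕ} {μ : Fin n → Measure ℝ} {C : ℝ}

lemma exists_ae_sum_eq (h : IsJointMix n μ C) :
    ∃ P : Measure (Fin n → ℝ), IsProbabilityMeasure P ∧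
      (∀ i, P.map (fun ω => ω i) = μ i) ∧ ∀ᵐ ω ∂P, ∑ i, ω i = C := by
  obtain ⟨P, hP, hmarg, hsum⟩ := h
  refine ⟨P, hP, hmarg, ?_⟩
  rw [ae_iff_measure_eq (measurableSet_eq_fun (by fun_prop) measurable_const).nullMeasurableSet,
    hsum, measure_univ]

lemma eq_sum_integral (h : IsJointMix n μ C) (hint : ∀ i, Integrable id (μ i)) :
    C = ∑ i, ∫ z, z ∂μ i := by
  obtain ⟨P, hP, hmarg, hae⟩ := h.exists_ae_sum_eq
  have hcoord : ∀ i, AEMeasurable (fun ω : Fin n → ℝ => ω i) P :=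
    fun i => (measurable_pi_apply i).aemeasurable
  have hint' : ∀ i, Integrable (fun ω : Fin n → ℝ => ω i) P := fun i =>
    (integrable_map_measure aestronglyMeasurable_id (hcoord i)).1 (hmarg i ▸ hint i)
  calc C = ∫ ω, ∑ i, ω i ∂P := by simp [integral_congr_ae hae]
    _ = ∑ i, ∫ ω, ω i ∂P := integral_finsetSum _ fun i _ => hint' i
    _ = ∑ i, ∫ z, z ∂μ i := by
      refine Finset.sum_congr rfl fun i _ => ?_
      rw [← hmarg i, integral_map (f := fun z : ℝ => z) (hcoord i) aestronglyMeasurable_id]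

lemma ae_of_forall_sum_eq {p q : ℝ → Prop} (h : IsJointMix n μ C) (hp : ∀ i, ∀ᵐ z ∂μ i, p z)
    (hq : MeasurableSet {z | q z})
    (hpq : ∀ ω : Fin n → ℝ, ∑ i, ω i = C → (∀ i, p (ω i)) → ∀ j, q (ω j)) (j : Fin n) :
    ∀ᵐ z ∂μ j, q z := by
  obtain ⟨P, hP, hmarg, hae⟩ := h.exists_ae_sum_eq
  have hcoord : ∀ i, AEMeasurable (fun ω : Fin n → ℝ => ω i) P :=
    fun i => (measurable_pi_apply i).aemeasurable
  have hpP : ∀ᵐ ω ∂P, ∀ i, p (ω i) :=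
    ae_all_iff.2 fun i => ae_of_ae_map (hcoord i) (hmarg i ▸ hp i)
  rw [← hmarg j, ae_map_iff (hcoord j) hq]
  filter_upwards [hae, hpP] with ω hsumω hpω using hpq ω hsumω hpω j

lemma sub_mul_le (h : IsJointMix n μ C) {b : ℝ} (hb : ∀ i, ∀ᵐ z ∂μ i, z ≤ b) (j : Fin n) :
    ∀ᵐ z ∂μ j, C - (n - 1) * b ≤ z :=
  h.ae_of_forall_sum_eq hb measurableSet_Ici (fun ω hω hbω j => by
    simpa using sub_mul_le_of_sum_eq hω hbω j) j

lemma le_sub_mul (h : IsJointMix n μ C) {a : ℝ} (ha : ∀ i, ∀ᵐ z ∂μ i, a ≤ z) (j : Fin n) :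
    ∀ᵐ z ∂μ j, z ≤ C - (n - 1) * a :=
  h.ae_of_forall_sum_eq ha measurableSet_Iic (fun ω hω haω j => by
    simpa using le_sub_mul_of_sum_eq hω haω j) j

end IsJointMix

theorem stmt11_general (n : ℕ) (hn : 1 ≤ n) (μ : Measure ℝ) [IsProbabilityMeasure μ]
    (x y c : ℝ)
    (hx : Filter.Tendsto (fun ε => quantile μ ε) (nhdsWithin 0 (Set.Ioi 0)) (nhds x))
    (hy : Filter.Tendsto (fun ε => quantile μ (1 - ε)) (nhdsWithin 0 (Set.Ioi 0)) (nhds y))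
    (hc : c = ∫ z, z ∂μ)
    (hCM : ∃ c', IsCompletelyMixable n μ c') :
    y + ((n : ℝ) - 1) * x ≤ n * c ∧ (n : ℝ) * c ≤ x + ((n : ℝ) - 1) * y := by
  obtain ⟨c', hmix⟩ := hCM
  have hxz := ae_le_of_tendsto_quantile_zero hx
  have hzy := ae_le_of_tendsto_quantile_one hy
  have hint : Integrable id μ := Integrable.of_mem_Icc x y aemeasurable_id (hxz.and hzy)
  have hcenter : (n : ℝ) * c' = n * c := by
    simpa [hc] using hmix.eq_sum_integral fun _ => hint
  rw [IsCompletelyMixable, hcenter] at hmix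
  constructor
  · linarith [le_of_tendsto_quantile_one hy (hmix.le_sub_mul (fun _ => hxz) ⟨0, hn⟩)]
  · linarith [le_of_tendsto_quantile_zero hx (hmix.sub_mul_le (fun _ => hzy) ⟨0, hn⟩)]

theorem stmt11 (n : ℕ) (hn : 1 ≤ n) (μ : Measure ℝ) [IsProbabilityMeasure μ]
    (M : ℝ) (hbdd : μ {z : ℝ | |z| ≤ M}ᶜ = 0)
    (x y c : ℝ)
    (hx : Filter.Tendsto (fun ε => quantile μ ε) (nhdsWithin 0 (Set.Ioi 0)) (nhds x))
    (hy : Filter.Tendsto (fun ε => quantile μ (1 - ε)) (nhdsWithin 0 (Set.Ioi 0)) (nhds y))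
    (hc : c = ∫ z, z ∂μ)
    (hCM : ∃ c', IsCompletelyMixable n μ c') :
    y + ((n : ℝ) - 1) * x ≤ n * c ∧ (n : ℝ) * c ≤ x + ((n : ℝ) - 1) * y :=
  stmt11_general n hn μ x y c hx hy hc hCM
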